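/- For λ₀, λ₁ ∈ ℕ₀ⁿ with λ₀ ≠ λ₁, the polynomial X^{λ₀} − X^{λ₁} is irreducible in ℤ[X₁,…,Xₙ] if and only if λ₀·λ₁ = 0 and λ₀ − λ₁ has coprime coefficients. -/

import Mathlib

open scoped BigOperators

namespace WordEquations

/-- The set of letters occurring in the images of a (letter-image) morphism. -/
def alph {Ξ Δ : Type*} (h : Ξ → List Δ) : Set Δ := ⋃ x, {a | a ∈ h x}

/-- `h` is a solution of the system `T` of word equations. -/
def IsSolution {Ξ A : Type*} (h : Ξ → List A) (T : Set (List Ξ × List Ξ)) : Prop :=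
  ∀ e ∈ T, e.1.flatMap h = e.2.flatMap h

/-- `h` is a solution of the single word equation `E`. -/
def IsSolutionE {Ξ A : Type*} (h : Ξ → List A) (E : List Ξ × List Ξ) : Prop :=
  E.1.flatMap h = E.2.flatMap h

/-- `θ` is a renaming of letters on the set `S`: it maps each letter of `S` to a
single letter, injectively on `S`. -/
def IsRenamingOn {A B : Type*} (θ : A → List B) (S : Set A) : Prop :=
  (∀ a ∈ S, ∃ b, θ a = [b]) ∧ ∀ a₁ ∈ S, ∀ a₂ ∈ S, θ a₁ = θ a₂ → a₁ = a₂

/-- `g` is a principal solution of `T`: whenever `g = θ ∘ g'` for a solution `g'`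
(and a morphism `θ` non-erasing on `alph g'`), `θ` is a renaming of letters. -/
def IsPrincipalSolution {Ξ Δ : Type*} (g : Ξ → List Δ) (T : Set (List Ξ × List Ξ)) : Prop :=
  IsSolution g T ∧
  ∀ (Δ' : Type) (g' : Ξ → List Δ') (θ : Δ' → List Δ),
    IsSolution g' T → (∀ a ∈ alph g', θ a ≠ []) →
    (∀ x, g x = (g' x).flatMap θ) → IsRenamingOn θ (alph g')

/-- The vector `γ(h)_a = (|h(x₁)|_a, …, |h(xₙ)|_a) ∈ ℚⁿ`. -/
def gamVec {n : ℕ} {Δ : Type*} [DecidableEq Δ] (h : Fin n → List Δ) (a : Δ) :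
    Fin n → ℚ := fun j => ((h j).count a : ℚ)

/-- `Γ_h`, the ℚ-span of the vectors `γ(h)_a`. -/
noncomputable def GammaSpace {n : ℕ} {Δ : Type*} [DecidableEq Δ] (h : Fin n → List Δ) :
    Submodule ℚ (Fin n → ℚ) := Submodule.span ℚ (Set.range (gamVec h))

/-- The rank of a morphism: `dim Γ_h`. -/
noncomputable def morphRank {n : ℕ} {Δ : Type*} [DecidableEq Δ] (h : Fin n → List Δ) : ℕ :=
  Module.finrank ℚ ↥(GammaSpace h)

/-- `Mℕ`: all finite nonempty sums `Σᵢ aᵢ αᵢ` with `aᵢ` positive integers and `αᵢ ∈ M`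
(equivalently, nonempty finite sums of elements of `M` with repetitions). -/
def natSums {n : ℕ} (M : Set (Fin n → ℚ)) : Set (Fin n → ℚ) :=
  {v | ∃ l : List (Fin n → ℚ), l ≠ [] ∧ (∀ x ∈ l, x ∈ M) ∧ l.sum = v}

/-- `M ⊆ ℚⁿ` has rank `r`: the ℚ-span of `M` has dimension `r`, and `M` is not contained
in any finite union of `(r-1)`-dimensional subspaces of its span. -/
def HasRank {n : ℕ} (M : Set (Fin n → ℚ)) (r : ℕ) : Prop :=
  Module.finrank ℚ ↥(Submodule.span ℚ M) = r ∧
  ∀ V : Finset (Submodule ℚ (Fin n → ℚ)),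
    (∀ W ∈ V, W ≤ Submodule.span ℚ M ∧ Module.finrank ℚ ↥W + 1 = r) →
    ¬ M ⊆ ⋃ W ∈ V, (W : Set (Fin n → ℚ))

/-- The monomial `X^α = ∏ᵢ Xᵢ^{αᵢ}` in `ℤ[X₁,…,Xₙ]`. -/
noncomputable def Xpow {n : ℕ} (α : Fin n → ℕ) : MvPolynomial (Fin n) ℤ :=
  ∏ i, MvPolynomial.X i ^ α i

/-- The polynomial `Σ_{a : w_a = j} ∏_{t<a} X_{w_t}` associated with one side of an equation. -/
noncomputable def sideS {n : ℕ} (w : List (Fin n)) (j : Fin n) : MvPolynomial (Fin n) ℤ :=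
  ∑ a : Fin w.length, if w.get a = j then ((w.take (a : ℕ)).map MvPolynomial.X).prod else 0

/-- The polynomial `S_{E,x_j}` of the equation `E = (u,v)`. -/
noncomputable def SE {n : ℕ} (E : List (Fin n) × List (Fin n)) (j : Fin n) :
    MvPolynomial (Fin n) ℤ :=
  sideS E.1 j - sideS E.2 j

/-- Evaluation `p ↦ p(β)`, induced by `Xᵢ ↦ x^{βᵢ}`. -/
noncomputable def evalAt {n : ℕ} (β : Fin n → ℕ) (p : MvPolynomial (Fin n) ℤ) : Polynomial ℤ :=
  MvPolynomial.eval₂ (Int.castRingHom (Polynomial ℤ)) (fun i => Polynomial.X ^ β i) p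

/-- `λ⁺`, the positive part of an integer vector. -/
def lamPos {n : ℕ} (lam : Fin n → ℤ) : Fin n → ℕ := fun i => (lam i).toNat

/-- `λ⁻`, the negative part of an integer vector. -/
def lamNeg {n : ℕ} (lam : Fin n → ℤ) : Fin n → ℕ := fun i => (-(lam i)).toNat

/-- The length type `L(θ_α ∘ h)` of the composition of `h` with the power morphism
`θ_α : aᵢ ↦ aᵢ^{αᵢ}`. -/
def powLenType {n k : ℕ} (α : Fin k → ℕ) (h : Fin n → List (Fin k)) : Fin n → ℕ :=
  fun x => ∑ a, α a * (h x).count a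

/-- The field `ℚ(x)`, realized as the field of fractions of `ℤ[x]`. -/
noncomputable abbrev RatX : Type := FractionRing (Polynomial ℤ)

/-- The vector `𝒮_E(β) ∈ ℚ(x)ⁿ`. -/
noncomputable def SEvec {n : ℕ} (E : List (Fin n) × List (Fin n)) (β : Fin n → ℕ) :
    Fin n → RatX :=
  fun j => algebraMap (Polynomial ℤ) RatX (evalAt β (SE E j))

/-- The set of exponents of the minimal monomials of `p` (exponents in the support of `p`
that are minimal with respect to the componentwise order). -/
noncomputable def minimalSupport {n : ℕ} (p : MvPolynomial (Fin n) ℤ) : Finset (Fin n →₀ ℕ) :=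
  p.support.filter (fun β => ∀ β' ∈ p.support, β' ≤ β → β' = β)

/-
If both `λ₀` and `λ₁` involve `Xᵢ`, then `Xᵢ` divides `X^λ₀ - X^λ₁`; if `d = gcd(λ₀ - λ₁) > 1`
and the supports are disjoint, then `X^λ₀ - X^λ₁ = X^{dα} - X^{dβ}` is divisible by `X^α - X^β`
with a cofactor taking the value `d` at `(1, …, 1)`. Neither factor is a unit, because no
`X^α - X^β` is one: it vanishes at `(1, …, 1)`.

Conversely, pick `g` with `(λ₀ - λ₁) ⬝ᵥ g = 1` (Bézout) and send `X^δ` to the Laurent monomial of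
`δ - (δ ⬝ᵥ g)(λ₀ - λ₁) ∈ ℤⁿ`. This ring map into the domain `ℤ[ℤⁿ]` kills `p = X^λ₀ - X^λ₁`, and
two monomials with the same image have exponents differing by `k(λ₀ - λ₁)`; by disjointness of the
supports they are `X^γ X^{kλ₀}` and `X^γ X^{kλ₁}`, so `p` divides their difference. Hence the
kernel is `(p)`, which is therefore prime.
-/

end WordEquations

namespace AddMonoidAlgebra

theorem ker_mapDomainRingHom_le {R M N : Type*} [Ring R] [AddMonoid M] [AddMonoid N]
    (f : M →+ N) {I : Ideal (AddMonoidAlgebra R M)}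
    (h : ∀ a b, f a = f b → single a (1 : R) - single b 1 ∈ I) :
    RingHom.ker (mapDomainRingHom R f) ≤ I := by
  intro q hq
  -- modulo `I`, every monomial may be moved to a fixed representative of its fibre under `f`
  have hsec : ∀ a, f (Function.invFun f (f a)) = f a := fun a => Function.invFun_eq ⟨a, rfl⟩
  have hmem : ∀ x : AddMonoidAlgebra R M,
      x - mapDomain (Function.invFun f) (mapDomain f x) ∈ I := by
    intro x
    induction x using induction_linear with
    | zero => simp [mapDomain_zero]
    | add x y hx hy => rw [mapDomain_add, mapDomain_add, add_sub_add_comm]; exact add_mem hx hy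
    | single a r =>
      rw [mapDomain_single, mapDomain_single, ← mul_one r, ← smul_eq_mul, ← smul_single,
        ← smul_single, ← smul_sub]
      exact I.smul_of_tower_mem r (h _ _ (hsec a).symm)
  have hfq : mapDomain f q = 0 := RingHom.mem_ker.mp hq
  simpa [hfq, mapDomain_zero] using hmem q

end AddMonoidAlgebra

namespace WordEquations

open MvPolynomial

section Xpow

variable {n : ℕ}

theorem Xpow_eq_monomial (l : Fin n → ℕ) :
    Xpow l = monomial (Finsupp.equivFunOnFinite.symm l) 1 := by
  rw [monomial_eq, C_1, one_mul, Finsupp.prod_fintype _ _ (fun _ => pow_zero _)]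
  rfl

theorem monomial_one_eq_Xpow (d : Fin n →₀ ℕ) : monomial d (1 : ℤ) = Xpow d := by
  rw [Xpow_eq_monomial, Finsupp.equivFunOnFinite_symm_coe]

theorem Xpow_injective : Function.Injective (Xpow (n := n)) := fun a b h => by
  rw [Xpow_eq_monomial, Xpow_eq_monomial] at h
  exact Finsupp.equivFunOnFinite.symm.injective (monomial_left_injective one_ne_zero h)

theorem Xpow_add (a b : Fin n → ℕ) : Xpow (a + b) = Xpow a * Xpow b := by
  simp only [Xpow, Pi.add_apply, pow_add, Finset.prod_mul_distrib]

theorem Xpow_nsmul (m : ℕ) (a : Fin n → ℕ) : Xpow (m • a) = Xpow a ^ m := by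
  simp only [Xpow, Pi.smul_apply, smul_eq_mul, ← Finset.prod_pow, ← pow_mul, mul_comm]

theorem eval_one_Xpow (l : Fin n → ℕ) : eval 1 (Xpow l) = 1 := by
  simp [Xpow]

theorem eq_zero_of_isUnit_Xpow {l : Fin n → ℕ} (h : IsUnit (Xpow l)) : l = 0 := by
  have h0 : eval 0 (Xpow l) ≠ 0 := (h.map (eval 0)).ne_zero
  funext i
  by_contra hi
  exact h0 (by simp [Xpow, Finset.prod_eq_zero_iff]; exact ⟨i, hi⟩)

theorem not_isUnit_Xpow_sub (a b : Fin n → ℕ) : ¬IsUnit (Xpow a - Xpow b) := fun h => by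
  simpa [eval_one_Xpow] using h.map (eval 1)

theorem Xpow_sub_dvd_Xpow_add_nsmul_sub (a b c : Fin n → ℕ) (k : ℕ) :
    Xpow a - Xpow b ∣ Xpow (c + k • a) - Xpow (c + k • b) := by
  rw [Xpow_add, Xpow_add, Xpow_nsmul, Xpow_nsmul, ← mul_sub]
  exact (sub_dvd_pow_sub_pow _ _ k).mul_left _

theorem eq_zero_of_irreducible_Xpow_add_sub {a b c : Fin n → ℕ}
    (h : Irreducible (Xpow (c + a) - Xpow (c + b))) : c = 0 := by
  rw [Xpow_add, Xpow_add, ← mul_sub] at h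
  exact eq_zero_of_isUnit_Xpow ((h.isUnit_or_isUnit rfl).resolve_right (not_isUnit_Xpow_sub a b))

theorem eq_one_of_irreducible_Xpow_nsmul_sub {a b : Fin n → ℕ} {m : ℕ}
    (h : Irreducible (Xpow (m • a) - Xpow (m • b))) : m = 1 := by
  rw [Xpow_nsmul, Xpow_nsmul, ← geom_sum₂_mul] at h
  have hunit := (h.isUnit_or_isUnit rfl).resolve_right (not_isUnit_Xpow_sub a b)
  simpa [eval_one_Xpow, Int.ofNat_isUnit] using hunit.map (eval 1)

end Xpow

section Exponents

variable {ι : Type*}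

theorem sum_mul_eq_zero_iff [Fintype ι] {l₀ l₁ : ι → ℕ} :
    ∑ i, l₀ i * l₁ i = 0 ↔ ∀ i, l₀ i = 0 ∨ l₁ i = 0 := by
  simp [Finset.sum_eq_zero_iff]

theorem exists_eq_add_nsmul_of_disjoint {l₀ l₁ α β : ι → ℕ} (hdisj : ∀ i, l₀ i = 0 ∨ l₁ i = 0)
    {k : ℕ} (h : ∀ i, (α i : ℤ) - β i = k * ((l₀ i : ℤ) - l₁ i)) :
    ∃ c, α = c + k • l₀ ∧ β = c + k • l₁ := by
  refine ⟨β - k • l₁, funext fun i => ?_, funext fun i => ?_⟩ <;>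
  · have hi := h i
    simp only [Pi.add_apply, Pi.sub_apply, Pi.smul_apply, smul_eq_mul]
    rcases hdisj i with h0 | h0 <;>
      simp only [h0, Nat.cast_zero, sub_zero, zero_sub, mul_neg, mul_zero, add_zero, tsub_zero]
        at hi ⊢ <;> omega

theorem exists_eq_natAbs_gcd_nsmul_of_disjoint [Fintype ι] {l₀ l₁ : ι → ℕ}
    (hdisj : ∀ i, l₀ i = 0 ∨ l₁ i = 0) :
    ∃ a b : ι → ℕ, l₀ = (Finset.univ.gcd (fun i => (l₀ i : ℤ) - (l₁ i : ℤ))).natAbs • a ∧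
      l₁ = (Finset.univ.gcd (fun i => (l₀ i : ℤ) - (l₁ i : ℤ))).natAbs • b := by
  set m := (Finset.univ.gcd (fun i => (l₀ i : ℤ) - (l₁ i : ℤ))).natAbs
  have hdvd : ∀ i, m ∣ l₀ i ∧ m ∣ l₁ i := fun i => by
    have h := Int.natAbs_dvd_natAbs.mpr (Finset.gcd_dvd (Finset.mem_univ i) :
      Finset.univ.gcd (fun i => (l₀ i : ℤ) - (l₁ i : ℤ)) ∣ (l₀ i : ℤ) - l₁ i)
    rcases hdisj i with h0 | h0 <;> simp_all [m]
  exact ⟨fun i => l₀ i / m, fun i => l₁ i / m,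
    funext fun i => (Nat.mul_div_cancel' (hdvd i).1).symm,
    funext fun i => (Nat.mul_div_cancel' (hdvd i).2).symm⟩

section Projection

variable [Fintype ι]

/-- When `lam ⬝ᵥ g = 1`, this realises `d ↦ [d] ∈ ℤ^ι ⧸ ℤ lam` inside `ℤ^ι`, as the projection
along `lam` onto the kernel of `· ⬝ᵥ g`. -/
def projAlong (lam g : ι → ℤ) : (ι →₀ ℕ) →+ (ι → ℤ) where
  toFun d := (fun i => (d i : ℤ)) - ((fun i => (d i : ℤ)) ⬝ᵥ g) • lam
  map_zero' := by ext; simp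
  map_add' d e := by
    ext i
    simp only [Finsupp.coe_add, Pi.add_apply, Nat.cast_add, Pi.sub_apply, Pi.smul_apply,
      smul_eq_mul]
    rw [show (fun i => (d i : ℤ) + e i) = (fun i => (d i : ℤ)) + fun i => (e i : ℤ) from rfl,
      add_dotProduct]
    ring

theorem exists_sub_eq_mul_of_projAlong_eq {lam g : ι → ℤ} {d e : ι →₀ ℕ}
    (h : projAlong lam g d = projAlong lam g e) : ∃ k : ℤ, ∀ i, (d i : ℤ) - e i = k * lam i :=
  ⟨((fun i => (d i : ℤ)) ⬝ᵥ g) - (fun i => (e i : ℤ)) ⬝ᵥ g, fun i => by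
    have hi := congrFun h i
    simp only [projAlong, AddMonoidHom.coe_mk, ZeroHom.coe_mk, Pi.sub_apply, Pi.smul_apply,
      smul_eq_mul] at hi
    linear_combination hi⟩

theorem projAlong_eq_of_sub_eq {lam g : ι → ℤ} (hg : lam ⬝ᵥ g = 1) {d e : ι →₀ ℕ}
    (h : ∀ i, (d i : ℤ) - e i = lam i) : projAlong lam g d = projAlong lam g e := by
  have hde : (fun i => (d i : ℤ)) = (fun i => (e i : ℤ)) + lam := by
    ext i; simp [← h i]
  ext i
  simp only [projAlong, AddMonoidHom.coe_mk, ZeroHom.coe_mk, Pi.sub_apply, Pi.smul_apply,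
    smul_eq_mul, hde, add_dotProduct, hg, Pi.add_apply]
  ring

end Projection

end Exponents

section Binomial

variable {n : ℕ}

theorem disjoint_of_irreducible_Xpow_sub {l₀ l₁ : Fin n → ℕ}
    (h : Irreducible (Xpow l₀ - Xpow l₁)) : ∀ i, l₀ i = 0 ∨ l₁ i = 0 := by
  have hsplit : ∀ l l' : Fin n → ℕ, l ⊓ l' + (l - l') = l := fun l l' => by
    ext i; simp only [Pi.add_apply, Pi.inf_apply, Pi.sub_apply]; omega
  have hinf : l₀ ⊓ l₁ = 0 := eq_zero_of_irreducible_Xpow_add_sub (a := l₀ - l₁) (b := l₁ - l₀)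
    (by rwa [hsplit, inf_comm, hsplit])
  intro i
  simpa using congrFun hinf i

theorem gcd_sub_eq_one_of_irreducible_Xpow_sub {l₀ l₁ : Fin n → ℕ}
    (h : Irreducible (Xpow l₀ - Xpow l₁)) (hdisj : ∀ i, l₀ i = 0 ∨ l₁ i = 0) :
    Finset.univ.gcd (fun i => (l₀ i : ℤ) - (l₁ i : ℤ)) = 1 := by
  obtain ⟨a, b, h₀, h₁⟩ := exists_eq_natAbs_gcd_nsmul_of_disjoint hdisj
  have hm := eq_one_of_irreducible_Xpow_nsmul_sub (a := a) (b := b) (by rwa [← h₀, ← h₁])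
  rw [← Finset.normalize_gcd, ← Int.abs_eq_normalize, ← Int.natCast_natAbs, hm, Nat.cast_one]

theorem Xpow_sub_dvd_of_disjoint {l₀ l₁ α β : Fin n → ℕ} (hdisj : ∀ i, l₀ i = 0 ∨ l₁ i = 0)
    {k : ℤ} (h : ∀ i, (α i : ℤ) - β i = k * ((l₀ i : ℤ) - l₁ i)) :
    Xpow l₀ - Xpow l₁ ∣ Xpow α - Xpow β := by
  obtain ⟨k, rfl | rfl⟩ := Int.eq_nat_or_neg k
  · obtain ⟨c, rfl, rfl⟩ := exists_eq_add_nsmul_of_disjoint hdisj h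
    exact Xpow_sub_dvd_Xpow_add_nsmul_sub _ _ _ _
  · obtain ⟨c, rfl, rfl⟩ := exists_eq_add_nsmul_of_disjoint (α := β) (β := α) hdisj (k := k)
      fun i => by linear_combination -h i
    exact dvd_sub_comm.mp (Xpow_sub_dvd_Xpow_add_nsmul_sub _ _ _ _)

theorem prime_Xpow_sub {l₀ l₁ : Fin n → ℕ} (hne : l₀ ≠ l₁) (hdisj : ∀ i, l₀ i = 0 ∨ l₁ i = 0)
    (hgcd : Finset.univ.gcd (fun i => (l₀ i : ℤ) - (l₁ i : ℤ)) = 1) :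
    Prime (Xpow l₀ - Xpow l₁) := by
  set lam : Fin n → ℤ := fun i => (l₀ i : ℤ) - l₁ i
  obtain ⟨g, hg⟩ := Finset.gcd_eq_sum_mul Finset.univ lam
  let Θ := AddMonoidAlgebra.mapDomainRingHom ℤ (projAlong lam g)
  have hΘ : ∀ l, Θ (Xpow l) = .single (projAlong lam g (Finsupp.equivFunOnFinite.symm l)) 1 :=
    fun l => by
      rw [Xpow_eq_monomial, ← single_eq_monomial]
      exact AddMonoidAlgebra.mapDomain_single
  have hker : RingHom.ker Θ = Ideal.span {Xpow l₀ - Xpow l₁} := by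
    refine le_antisymm (AddMonoidAlgebra.ker_mapDomainRingHom_le _ fun d e hde => ?_) ?_
    · obtain ⟨k, hk⟩ := exists_sub_eq_mul_of_projAlong_eq hde
      rw [Ideal.mem_span_singleton, single_eq_monomial, single_eq_monomial, monomial_one_eq_Xpow,
        monomial_one_eq_Xpow]
      exact Xpow_sub_dvd_of_disjoint hdisj hk
    · rw [Ideal.span_le, Set.singleton_subset_iff, SetLike.mem_coe, RingHom.mem_ker, map_sub,
        sub_eq_zero, hΘ, hΘ]
      congr 1
      exact projAlong_eq_of_sub_eq (hgcd ▸ hg).symm fun i => by simp [lam]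
  have hp0 : Xpow l₀ - Xpow l₁ ≠ 0 := sub_ne_zero.mpr (Xpow_injective.ne hne)
  exact (Ideal.span_singleton_prime hp0).mp (hker ▸ RingHom.ker_isPrime Θ)

end Binomial

/-- for `λ₀ ≠ λ₁` in `ℕ₀ⁿ`, the polynomial `X^{λ₀} - X^{λ₁}` is
irreducible iff `λ₀·λ₁ = 0` and `λ₀ - λ₁` has coprime coefficients. -/
theorem Xpow_sub_irreducible_iff {n : ℕ} (l₀ l₁ : Fin n → ℕ) (hne : l₀ ≠ l₁) :
    Irreducible (Xpow l₀ - Xpow l₁) ↔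
      (∑ i, l₀ i * l₁ i = 0 ∧
        Finset.univ.gcd (fun i => (l₀ i : ℤ) - (l₁ i : ℤ)) = 1) := by
  rw [sum_mul_eq_zero_iff]
  refine ⟨fun h => ?_, fun ⟨hdisj, hgcd⟩ => (prime_Xpow_sub hne hdisj hgcd).irreducible⟩
  have hdisj := disjoint_of_irreducible_Xpow_sub h
  exact ⟨hdisj, gcd_sub_eq_one_of_irreducible_Xpow_sub h hdisj⟩

end WordEquations
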